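/- arXiv:1712.08177 — 2 statements merged into one kernel-verified Lean document; each statement's English description precedes it below -/
import Mathlib

section
/- Let G be a compact Lie group equipped with a bi-invariant Riemannian metric, and consider the diagonal isometric action of G on the product √2·G × √2·G (each factor carrying the metric scaled by √2), given by g·(g₁,g₂) = (g g₁, g g₂). Then the metric quotient (√2·G × √2·G)/G is isometric to G. -/
/-- For a compact (Lie) group `G` with a bi-invariant metric (left and right
translations are isometries; the Riemannian/geodesic nature of the metric is encoded by the
midpoint property), the metric quotient of `√2·G × √2·G` by the diagonal left action of `G`
is isometric to `G`, via the map sending the orbit of `(g₁, g₂)` to `g₁⁻¹ * g₂`.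
The quotient distance between the orbits of `(g₁,g₂)` and `(h₁,h₂)` is
`⨅ g, √((√2 d(g g₁, h₁))² + (√2 d(g g₂, h₂))²)`. -/
theorem stmt0 {G : Type*} [Group G] [MetricSpace G] [CompactSpace G]
    [IsIsometricSMul G G] [IsIsometricSMul Gᵐᵒᵖ G]
    (hmid : ∀ x y : G, ∃ m : G, dist x m = dist x y / 2 ∧ dist m y = dist x y / 2)
    (g₁ g₂ h₁ h₂ : G) :
    (⨅ g : G, Real.sqrt ((Real.sqrt 2 * dist (g * g₁) h₁) ^ 2
        + (Real.sqrt 2 * dist (g * g₂) h₂) ^ 2))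
      = dist (g₁⁻¹ * g₂) (h₁⁻¹ * h₂) := by
  set a := h₁ * g₁⁻¹ with ha
  set b := h₂ * g₂⁻¹ with hb
  have h1 : ∀ g : G, dist (g * g₁) h₁ = dist g a := by
    intro g
    have : dist (g * g₁) (a * g₁) = dist g a := dist_mul_right g a g₁
    simpa [ha, mul_assoc] using this
  have h2 : ∀ g : G, dist (g * g₂) h₂ = dist g b := by
    intro g
    have : dist (g * g₂) (b * g₂) = dist g b := dist_mul_right g b g₂
    simpa [hb, mul_assoc] using this
  have hrhs : dist (g₁⁻¹ * g₂) (h₁⁻¹ * h₂) = dist a b := by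
    have e1 : dist (h₁ * (g₁⁻¹ * g₂)) (h₁ * (h₁⁻¹ * h₂)) = dist (g₁⁻¹ * g₂) (h₁⁻¹ * h₂) :=
      dist_mul_left h₁ _ _
    have e2 : dist (a * g₂) (b * g₂) = dist a b := dist_mul_right a b g₂
    rw [← e1, ← e2]
    congr 1 <;> simp [ha, hb, mul_assoc]
  simp only [h1, h2, hrhs]
  have sqrt2sq : (Real.sqrt 2) ^ 2 = 2 := Real.sq_sqrt (by norm_num)
  apply le_antisymm
  · obtain ⟨m, hm1, hm2⟩ := hmid a b
    have hle : Real.sqrt ((Real.sqrt 2 * dist m a) ^ 2 + (Real.sqrt 2 * dist m b) ^ 2)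
        = dist a b := by
      rw [dist_comm m a, hm1, hm2]
      rw [show (Real.sqrt 2 * (dist a b / 2)) ^ 2 + (Real.sqrt 2 * (dist a b / 2)) ^ 2
          = (dist a b) ^ 2 by rw [mul_pow, sqrt2sq]; ring]
      exact Real.sqrt_sq dist_nonneg
    calc (⨅ g : G, Real.sqrt ((Real.sqrt 2 * dist g a) ^ 2 + (Real.sqrt 2 * dist g b) ^ 2))
        ≤ Real.sqrt ((Real.sqrt 2 * dist m a) ^ 2 + (Real.sqrt 2 * dist m b) ^ 2) :=
          ciInf_le ⟨0, by rintro x ⟨g, rfl⟩; exact Real.sqrt_nonneg _⟩ m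
      _ = dist a b := hle
  · apply le_ciInf
    intro g
    have htri : dist a b ≤ dist a g + dist g b := dist_triangle a g b
    have hx : dist a g = dist g a := dist_comm a g
    have key : dist a g + dist g b
        ≤ Real.sqrt ((Real.sqrt 2 * dist g a) ^ 2 + (Real.sqrt 2 * dist g b) ^ 2) := by
      rw [Real.le_sqrt (by positivity) (by positivity)]
      rw [mul_pow, mul_pow, sqrt2sq, hx]
      nlinarith [sq_nonneg (dist g a - dist g b)]
    linarith
end

section
/- Let G be a finite group acting by isometries on ℝᵐ by permutations of coordinates (via a homomorphism ρ₁ : G → Sₘ), and let X be a finite subset of the quotient ℝᵐ/ρ₁(G). Then for all sufficiently large M > 0, the compact flat orbifold ℝᵐ/(ρ₁ × ρ₂^{(M)}), where ρ₂^{(M)} is the action of ℤᵐ by translations x ↦ x + M a for a ∈ ℤᵐ, contains an isometric copy of X. -/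
/-- The scaled integer translation vector `M·a ∈ ℝᵐ`. -/
noncomputable def translVec {m : ℕ} (M : ℝ) (a : Fin m → ℤ) : EuclideanSpace ℝ (Fin m) :=
  WithLp.toLp 2 (fun l => M * (a l : ℝ))

/-- The coordinate-permutation action of `σ ∈ Sₘ` on `ℝᵐ`. -/
noncomputable def permAct {m : ℕ} (σ : Equiv.Perm (Fin m))
    (y : EuclideanSpace ℝ (Fin m)) : EuclideanSpace ℝ (Fin m) :=
  WithLp.toLp 2 (fun l => y (σ⁻¹ l))

lemma translVec_zero {m : ℕ} (M : ℝ) : translVec (m := m) M 0 = 0 := by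
  ext l
  simp [translVec]

lemma norm_translVec_ge {m : ℕ} {M : ℝ} (hM : 0 ≤ M) {a : Fin m → ℤ} (ha : a ≠ 0) :
    M ≤ ‖translVec M a‖ := by
  obtain ⟨l, hl⟩ : ∃ l, a l ≠ 0 := by
    by_contra h
    push_neg at h
    exact ha (funext h)
  have h1 : |(translVec M a) l| ≤ ‖translVec M a‖ := by
    rw [EuclideanSpace.norm_eq]
    have : |(translVec M a) l| = Real.sqrt (‖(translVec M a) l‖ ^ 2) := by
      rw [Real.sqrt_sq_eq_abs, Real.norm_eq_abs, abs_abs]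
    rw [this]
    apply Real.sqrt_le_sqrt
    exact Finset.single_le_sum (f := fun i => ‖(translVec M a) i‖ ^ 2) (fun i _ => by positivity) (Finset.mem_univ l)
  refine le_trans ?_ h1
  have : |(translVec M a) l| = M * |(a l : ℝ)| := by
    simp [translVec, abs_mul, abs_of_nonneg hM]
  rw [this]
  have : (1 : ℝ) ≤ |(a l : ℝ)| := by
    rw [← Int.cast_abs]
    exact_mod_cast Int.one_le_abs hl
  nlinarith

/-- let a finite group `G` act on `ℝᵐ` by permutations of coordinates via
`ρ₁ : G → Sₘ`, and let `X` be a finite subset of `ℝᵐ/ρ₁(G)`, given by representatives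
`x 1, …, x N ∈ ℝᵐ` with quotient distances `⨅ g, |x i − ρ₁(g)·(x j)|`.  Then for all
sufficiently large `M > 0`, the compact flat orbifold `ℝᵐ/(ρ₁ × ρ₂^{(M)})` — where
`ρ₂^{(M)}` is the action of `ℤᵐ` by the translations `y ↦ y + M a` — contains an isometric
copy of `X`: the distances between the images of the `x i` in the orbifold, namely
`⨅_{(g,a)} |x i − (ρ₁(g)·(x j) + M a)|`, agree with the distances in `ℝᵐ/ρ₁(G)`. -/
theorem stmt7 {G : Type*} [Group G] [Finite G] {m : ℕ}
    (ρ₁ : G →* Equiv.Perm (Fin m)) {N : ℕ} (x : Fin N → EuclideanSpace ℝ (Fin m)) :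
    ∃ M₀ : ℝ, 0 < M₀ ∧ ∀ M : ℝ, M₀ ≤ M → ∀ i j : Fin N,
      (⨅ p : G × (Fin m → ℤ),
          dist (x i) (permAct (ρ₁ p.1) (x j) + translVec M p.2))
        = ⨅ g : G, dist (x i) (permAct (ρ₁ g) (x j)) := by
  classical
  have : Fintype G := Fintype.ofFinite G
  set D : ℝ := ∑ i : Fin N, ∑ j : Fin N, ∑ g : G, dist (x i) (permAct (ρ₁ g) (x j)) with hD
  have hD0 : 0 ≤ D := by
    apply Finset.sum_nonneg; intro i _
    apply Finset.sum_nonneg; intro j _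
    apply Finset.sum_nonneg; intro g _
    exact dist_nonneg
  have hDle : ∀ i j (g : G), dist (x i) (permAct (ρ₁ g) (x j)) ≤ D := by
    intro i j g
    calc dist (x i) (permAct (ρ₁ g) (x j))
        ≤ ∑ g : G, dist (x i) (permAct (ρ₁ g) (x j)) :=
          Finset.single_le_sum (f := fun g : G => dist (x i) (permAct (ρ₁ g) (x j))) (fun g _ => dist_nonneg) (Finset.mem_univ g)
      _ ≤ ∑ j : Fin N, ∑ g : G, dist (x i) (permAct (ρ₁ g) (x j)) :=
          Finset.single_le_sum (f := fun j => ∑ g : G, dist (x i) (permAct (ρ₁ g) (x j)))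
            (fun j _ => Finset.sum_nonneg fun g _ => dist_nonneg) (Finset.mem_univ j)
      _ ≤ D :=
          Finset.single_le_sum
            (f := fun i => ∑ j : Fin N, ∑ g : G, dist (x i) (permAct (ρ₁ g) (x j)))
            (fun i _ => Finset.sum_nonneg fun j _ =>
              Finset.sum_nonneg fun g _ => dist_nonneg) (Finset.mem_univ i)
  refine ⟨2 * D + 1, by linarith, fun M hM i j => ?_⟩
  have hM0 : 0 ≤ M := by linarith
  have hbdd : BddBelow (Set.range fun p : G × (Fin m → ℤ) =>
      dist (x i) (permAct (ρ₁ p.1) (x j) + translVec M p.2)) := by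
    refine ⟨0, ?_⟩
    rintro y ⟨p, rfl⟩
    exact dist_nonneg
  apply le_antisymm
  · apply le_ciInf
    intro g
    have := ciInf_le hbdd (⟨g, 0⟩ : G × (Fin m → ℤ))
    simpa [translVec_zero] using this
  · apply le_ciInf
    rintro ⟨g, a⟩
    by_cases ha : a = 0
    · subst ha
      have := ciInf_le (f := fun g : G => dist (x i) (permAct (ρ₁ g) (x j)))
        (Finite.bddBelow_range _) g
      simpa [translVec_zero] using this
    · have hle : (⨅ g : G, dist (x i) (permAct (ρ₁ g) (x j))) ≤ D := by
        refine le_trans (ciInf_le (Finite.bddBelow_range _) g) (hDle i j g)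
      have hnorm : M ≤ ‖translVec M a‖ := norm_translVec_ge hM0 ha
      have htri : ‖translVec M a‖ - dist (x i) (permAct (ρ₁ g) (x j)) ≤
          dist (x i) (permAct (ρ₁ g) (x j) + translVec M a) := by
        have h1 : dist (permAct (ρ₁ g) (x j)) (permAct (ρ₁ g) (x j) + translVec M a)
            = ‖translVec M a‖ := dist_self_add_right _ _
        have h2 := dist_triangle (permAct (ρ₁ g) (x j)) (x i)
          (permAct (ρ₁ g) (x j) + translVec M a)
        rw [dist_comm (permAct (ρ₁ g) (x j)) (x i)] at h2
        linarith [h1 ▸ h2]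
      have hd := hDle i j g
      linarith
end
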